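/- (Same-sender delivery Lemma) In any execution of Algorithm 1, if a process p_i toco-broadcasts a message m1 and later toco-broadcasts a message m2, then any process p_j that toco-delivers m2 must have toco-delivered m1 before m2. -/

import Mathlib

/-!
Operational model of Algorithm 1 (the `G`-fisheye (SC,CC)-broadcast algorithm).

`n` sequential asynchronous processes `p_0, …, p_{n-1}` (type `Fin n`) exchange
application messages of type `M` through reliable FIFO channels (one queue per
ordered pair of processes).  A proximity graph is a `SimpleGraph (Fin n)`.
-/

namespace Fisheye

/-- A tuple `⟨m, s_caus, s_tot, sender⟩`, as carried by `TOCOBC` protocol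
messages and as stored in the `pending` sets of Algorithm 1. -/
structure Tuple (n : ℕ) (M : Type) where
  msg : M
  scaus : Fin n → ℕ
  stot : ℕ
  sender : Fin n

/-- Protocol messages of Algorithm 1. -/
inductive PMsg (n : ℕ) (M : Type) where
  | tocobc (tp : Tuple n M)
  | catchup (d : ℕ) (sender : Fin n)

/-- Local state of a process: the vector clock `causal_i[1..n]`, the vector of
logical clock values `total_i[1..n]`, and the set `pending_i`. -/
structure ProcState (n : ℕ) (M : Type) where
  causal : Fin n → ℕ
  total : Fin n → ℕ
  pending : Set (Tuple n M)

/-- Global configuration: local states plus channel contents.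
`chan j i` is the FIFO queue of protocol messages in transit from `p_j`
to `p_i` (head = oldest message). -/
structure Config (n : ℕ) (M : Type) where
  proc : Fin n → ProcState n M
  chan : Fin n → Fin n → List (PMsg n M)

/-- Initially all clocks are `0`, all pending sets and channels are empty. -/
def initConfig (n : ℕ) (M : Type) : Config n M where
  proc := fun _ => { causal := fun _ => 0, total := fun _ => 0, pending := ∅ }
  chan := fun _ _ => []

/-- Lexicographic strict order on timestamps `⟨s_tot, sender⟩`. -/
def tsLt {n : ℕ} (x y : ℕ × Fin n) : Prop :=
  x.1 < y.1 ∨ (x.1 = y.1 ∧ x.2 < y.2)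

/-- Lexicographic (reflexive) order on timestamps. -/
def tsLe {n : ℕ} (x y : ℕ × Fin n) : Prop := tsLt x y ∨ x = y

/-- The set `C` at process `p_i`: pending tuples whose causal timestamp is
pointwise `≤ causal_i[·]`. -/
def inC {n : ℕ} {M : Type} (c : Config n M) (i : Fin n) (tp : Tuple n M) : Prop :=
  tp ∈ (c.proc i).pending ∧ ∀ k, tp.scaus k ≤ (c.proc i).causal k

/-- The set `T1` at `p_i`: tuples of `C` whose sender `p_j` satisfies
`⟨total_i[k], k⟩ > ⟨s_tot, j⟩` for every neighbor `p_k` of `p_j` in `G`. -/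
def inT1 {n : ℕ} {M : Type} (G : SimpleGraph (Fin n)) (c : Config n M) (i : Fin n)
    (tp : Tuple n M) : Prop :=
  inC c i tp ∧ ∀ k, G.Adj tp.sender k → tsLt (tp.stot, tp.sender) ((c.proc i).total k, k)

/-- The set `T2` at `p_i`: tuples of `T1` such that every pending tuple whose
sender is a neighbor of `p_j` has a (lexicographically) larger timestamp. -/
def inT2 {n : ℕ} {M : Type} (G : SimpleGraph (Fin n)) (c : Config n M) (i : Fin n)
    (tp : Tuple n M) : Prop :=
  inT1 G c i tp ∧ ∀ tp' ∈ (c.proc i).pending, G.Adj tp.sender tp'.sender →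
    tsLt (tp.stot, tp.sender) (tp'.stot, tp'.sender)

/-- Transition labels: `p_i` toco-broadcasts `m`; `p_i` receives the head
`TOCOBC` (resp. `CATCH_UP`) message of the channel from `p_j`; `p_i`
toco-delivers the message of the pending tuple `tp`. -/
inductive Label (n : ℕ) (M : Type) where
  | broadcast (i : Fin n) (m : M)
  | recvToco (i j : Fin n)
  | recvCatchup (i j : Fin n)
  | deliver (i : Fin n) (tp : Tuple n M)

/-- The transition relation of Algorithm 1. -/
inductive Step {n : ℕ} {M : Type} (G : SimpleGraph (Fin n)) :
    Config n M → Label n M → Config n M → Prop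
  /-- `TOCO_broadcast(m)` at `p_i`: increment `total_i[i]`, send
  `TOCOBC(m, ⟨causal_i[·], total_i[i], i⟩)` to every other process, add it to
  `pending_i`, and increment `causal_i[i]`. -/
  | broadcast (c : Config n M) (i : Fin n) (m : M) :
      Step G c (.broadcast i m)
        { proc := Function.update c.proc i
            { causal := Function.update (c.proc i).causal i ((c.proc i).causal i + 1)
              total := Function.update (c.proc i).total i ((c.proc i).total i + 1)
              pending := insert ⟨m, (c.proc i).causal, (c.proc i).total i + 1, i⟩
                           (c.proc i).pending }
          chan := fun a b =>
            if a = i ∧ b ≠ i then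
              c.chan a b ++ [PMsg.tocobc ⟨m, (c.proc i).causal, (c.proc i).total i + 1, i⟩]
            else c.chan a b }
  /-- Reception by `p_i` of the head `TOCOBC(m, ⟨s_caus, s_tot, sender⟩)` of the
  channel from `p_j`: add the tuple to `pending_i`, set `total_i[sender] := s_tot`,
  and if `total_i[i] ≤ s_tot`, set `total_i[i] := s_tot + 1` and send
  `CATCH_UP(total_i[i], i)` to every other process. -/
  | recvToco (c : Config n M) (i j : Fin n) (tp : Tuple n M) (rest : List (PMsg n M))
      (hhead : c.chan j i = PMsg.tocobc tp :: rest) :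
      Step G c (.recvToco i j)
        { proc := Function.update c.proc i
            { causal := (c.proc i).causal
              total :=
                if (c.proc i).total i ≤ tp.stot then
                  Function.update (Function.update (c.proc i).total tp.sender tp.stot) i
                    (tp.stot + 1)
                else Function.update (c.proc i).total tp.sender tp.stot
              pending := insert tp (c.proc i).pending }
          chan := fun a b =>
            if a = j ∧ b = i then rest
            else if (c.proc i).total i ≤ tp.stot ∧ a = i ∧ b ≠ i then
              c.chan a b ++ [PMsg.catchup (tp.stot + 1) i]
            else c.chan a b }
  /-- Reception by `p_i` of the head `CATCH_UP(d, s)` of the channel from `p_j`: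
  set `total_i[s] := d`. -/
  | recvCatchup (c : Config n M) (i j : Fin n) (d : ℕ) (s : Fin n) (rest : List (PMsg n M))
      (hhead : c.chan j i = PMsg.catchup d s :: rest) :
      Step G c (.recvCatchup i j)
        { proc := Function.update c.proc i
            { causal := (c.proc i).causal
              total := Function.update (c.proc i).total s d
              pending := (c.proc i).pending }
          chan := fun a b => if a = j ∧ b = i then rest else c.chan a b }
  /-- The background task at `p_i`: toco-deliver the message of a tuple of `T2`
  with lexicographically minimal timestamp `⟨s_tot, sender⟩`, remove it from
  `pending_i`, and (if its sender is not `p_i`) increment `causal_i[sender]`. -/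
  | deliver (c : Config n M) (i : Fin n) (tp : Tuple n M)
      (hT2 : inT2 G c i tp)
      (hmin : ∀ tp', inT2 G c i tp' → tsLe (tp.stot, tp.sender) (tp'.stot, tp'.sender)) :
      Step G c (.deliver i tp)
        { proc := Function.update c.proc i
            { causal :=
                if tp.sender = i then (c.proc i).causal
                else Function.update (c.proc i).causal tp.sender
                       ((c.proc i).causal tp.sender + 1)
              total := (c.proc i).total
              pending := (c.proc i).pending \ {tp} }
          chan := c.chan }

/-- Either a stuttering step (no transition) or a step of Algorithm 1. -/
def OptStep {n : ℕ} {M : Type} (G : SimpleGraph (Fin n)) (c : Config n M) :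
    Option (Label n M) → Config n M → Prop
  | none, c' => c' = c
  | some l, c' => Step G c l c'

/-- An execution of Algorithm 1: an infinite sequence of configurations starting
in the initial configuration, each obtained from the previous one by (at most)
one transition.  Toco-broadcast (application) messages are assumed unique: no
message is toco-broadcast twice. -/
structure Execution (n : ℕ) (M : Type) (G : SimpleGraph (Fin n)) where
  cfg : ℕ → Config n M
  lbl : ℕ → Option (Label n M)
  init : cfg 0 = initConfig n M
  steps : ∀ t, OptStep G (cfg t) (lbl t) (cfg (t + 1))
  uniqueBcast : ∀ (m : M) (i i' : Fin n) (t t' : ℕ),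
    lbl t = some (.broadcast i m) → lbl t' = some (.broadcast i' m) → t = t'

/-- `p_i` toco-broadcasts `m` at time `t`. -/
def Execution.broadcastsAt {n : ℕ} {M : Type} {G : SimpleGraph (Fin n)}
    (e : Execution n M G) (i : Fin n) (m : M) (t : ℕ) : Prop :=
  e.lbl t = some (.broadcast i m)

/-- `p_i` toco-delivers `m` at time `t`. -/
def Execution.deliversAt {n : ℕ} {M : Type} {G : SimpleGraph (Fin n)}
    (e : Execution n M G) (i : Fin n) (m : M) (t : ℕ) : Prop :=
  ∃ tp : Tuple n M, tp.msg = m ∧ e.lbl t = some (.deliver i tp)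

/-- The message causal order `⇝_M` of the execution: generated by (i) `m1`
toco-broadcast before `m2` by the same process, (ii) `m1` toco-delivered by a
process before that process toco-broadcasts `m2`, and transitivity. -/
inductive Execution.MsgCausal {n : ℕ} {M : Type} {G : SimpleGraph (Fin n)}
    (e : Execution n M G) : M → M → Prop
  | sameProc {i : Fin n} {m1 m2 : M} {t1 t2 : ℕ} :
      t1 < t2 → e.broadcastsAt i m1 t1 → e.broadcastsAt i m2 t2 → e.MsgCausal m1 m2
  | delivered {i : Fin n} {m1 m2 : M} {t1 t2 : ℕ} :
      t1 < t2 → e.deliversAt i m1 t1 → e.broadcastsAt i m2 t2 → e.MsgCausal m1 m2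
  | trans {m1 m2 m3 : M} : e.MsgCausal m1 m2 → e.MsgCausal m2 m3 → e.MsgCausal m1 m3

/-- The delivery condition of the background task of `p_i` is enabled. -/
def Deliverable {n : ℕ} {M : Type} (G : SimpleGraph (Fin n)) (e : Execution n M G)
    (i : Fin n) (t : ℕ) : Prop :=
  ∃ tp : Tuple n M, inT2 G (e.cfg t) i tp

/-- Fairness assumptions of the model: channels are reliable (a protocol message
in transit is eventually received) and the background task of each process is
eventually executed whenever it stays enabled. -/
structure Fair {n : ℕ} {M : Type} {G : SimpleGraph (Fin n)} (e : Execution n M G) : Prop where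
  recvFair : ∀ t (i j : Fin n), (e.cfg t).chan j i ≠ [] →
    ∃ t', t ≤ t' ∧ (e.lbl t' = some (.recvToco i j) ∨ e.lbl t' = some (.recvCatchup i j))
  deliverFair : ∀ t (i : Fin n), (∀ t', t ≤ t' → Deliverable G e i t') →
    ∃ t', t ≤ t' ∧ ∃ tp : Tuple n M, e.lbl t' = some (.deliver i tp)

end Fisheye


/-!
Let `tp₁` and `tp₂` be the tuples of the two broadcasts of `p_i`. Since `total_i[i]` and
`causal_i` never decrease, `tp₁` has the same sender as `tp₂`, a smaller `s_tot` and a pointwise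
smaller `s_caus`. When `tp₂` is pending at `p_j`, so is or was `tp₁`: for `j = i` since the
broadcast of `tp₁`, otherwise because the FIFO channel from `p_i` to `p_j` carries `tp₁` ahead of
`tp₂`. If `tp₁` were still pending when `p_j` delivers `tp₂`, it would lie in `T2` with a smaller
timestamp than `tp₂`, contradicting the minimality of the delivered tuple.
-/

namespace Fisheye

section

variable {α : Type*} {x y z : α} {L : List α}

def OccursBefore (x y : α) (L : List α) : Prop :=
  ∀ L₁ L₂, L = L₁ ++ y :: L₂ → x ∈ L₁

theorem OccursBefore.of_notMem (h : y ∉ L) : OccursBefore x y L := by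
  rintro L₁ L₂ rfl
  simp at h

theorem OccursBefore.append_singleton (h : OccursBefore x y L) (hx : x ∈ L) (z : α) :
    OccursBefore x y (L ++ [z]) := by
  intro L₁ L₂ hL
  rcases List.append_eq_append_iff.1 hL with ⟨L', rfl, -⟩ | ⟨L', rfl, hL'⟩
  · exact List.mem_append_left L' hx
  · rcases L' with _ | ⟨y', L'⟩
    · simpa using hx
    · obtain ⟨rfl, -⟩ := List.cons.inj hL'
      exact h L₁ L' rfl

theorem OccursBefore.of_cons (h : OccursBefore x y (z :: L)) :
    z ≠ y ∧ (z ≠ x → OccursBefore x y L) := by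
  refine ⟨fun hzy => by simpa using h [] L (hzy ▸ rfl), fun hzx L₁ L₂ hL => ?_⟩
  rcases List.mem_cons.1 (h (z :: L₁) L₂ (hL ▸ rfl)) with hxz | hx
  · exact absurd hxz.symm hzx
  · exact hx

end

section

variable {n : ℕ} {M : Type} {G : SimpleGraph (Fin n)}

theorem tsLt.trans {x y z : ℕ × Fin n} (h₁ : tsLt x y) (h₂ : tsLt y z) : tsLt x z := by
  unfold tsLt at *
  omega

theorem tsLe.fst_le {x y : ℕ × Fin n} (h : tsLe x y) : x.1 ≤ y.1 := by
  rcases h with (h | ⟨h, -⟩) | rfl <;> omega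

variable {c c' : Config n M} {l : Label n M}

theorem inT2_of_stot_lt {j : Fin n} {tp₁ tp₂ : Tuple n M} (h₂ : inT2 G c j tp₂)
    (h₁ : tp₁ ∈ (c.proc j).pending) (hsender : tp₁.sender = tp₂.sender)
    (hstot : tp₁.stot < tp₂.stot) (hscaus : tp₁.scaus ≤ tp₂.scaus) : inT2 G c j tp₁ := by
  obtain ⟨⟨⟨-, hcausal⟩, hT1⟩, hT2⟩ := h₂
  have hlt : tsLt (tp₁.stot, tp₁.sender) (tp₂.stot, tp₂.sender) := Or.inl hstot
  refine ⟨⟨⟨h₁, fun k => (hscaus k).trans (hcausal k)⟩, fun k hk => ?_⟩, fun tp hp hk => ?_⟩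
  · exact hlt.trans (hT1 k (hsender ▸ hk))
  · exact hlt.trans (hT2 tp hp (hsender ▸ hk))

def bcastTuple (c : Config n M) (i : Fin n) (m : M) : Tuple n M :=
  ⟨m, (c.proc i).causal, (c.proc i).total i + 1, i⟩

def PMsg.sender : PMsg n M → Fin n
  | .tocobc tp => tp.sender
  | .catchup _ s => s

def Config.WellAddressed (c : Config n M) : Prop :=
  ∀ a b x, x ∈ c.chan a b → x.sender = a ∧ b ≠ a

def Config.Carries (c : Config n M) (tp : Tuple n M) : Prop :=
  (∃ a b, PMsg.tocobc tp ∈ c.chan a b) ∨ ∃ j, tp ∈ (c.proc j).pending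

def Config.QueuedAhead (c : Config n M) (i j : Fin n) (tp₁ tp₂ : Tuple n M) : Prop :=
  .tocobc tp₁ ∈ c.chan i j ∧ OccursBefore (PMsg.tocobc tp₁) (.tocobc tp₂) (c.chan i j) ∧
    tp₂ ∉ (c.proc j).pending

theorem Step.chan_cases (h : Step G c l c') (a b : Fin n) :
    c'.chan a b = c.chan a b ∨
      (∃ x, c'.chan a b = c.chan a b ++ [x] ∧ b ≠ a ∧
        ((∃ m, l = .broadcast a m ∧ x = .tocobc (bcastTuple c a m)) ∨ ∃ d, x = .catchup d a)) ∨
      ∃ x, c.chan a b = x :: c'.chan a b ∧ ∀ tp, x = .tocobc tp → tp ∈ (c'.proc b).pending := by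
  cases h with
  | broadcast i m =>
    by_cases hab : a = i ∧ b ≠ i
    · obtain ⟨rfl, hb⟩ := hab
      simp [hb, bcastTuple]
    · simp [hab]
  | recvToco i j tp rest hhead =>
    by_cases hab : a = j ∧ b = i
    · obtain ⟨rfl, rfl⟩ := hab
      simp [hhead]
    · by_cases hcatch : (c.proc i).total i ≤ tp.stot ∧ a = i ∧ b ≠ i
      · obtain ⟨hle, rfl, hb⟩ := hcatch
        simp [hle, hb]
      · simp [hab, hcatch]
  | recvCatchup i j d s rest hhead =>
    by_cases hab : a = j ∧ b = i
    · obtain ⟨rfl, rfl⟩ := hab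
      simp [hhead]
    · simp [hab]
  | deliver i tp _ _ => simp

theorem Step.mem_chan {a b : Fin n} {x : PMsg n M} (h : Step G c l c') (hx : x ∈ c'.chan a b) :
    x ∈ c.chan a b ∨ b ≠ a ∧
      ((∃ m, l = .broadcast a m ∧ x = .tocobc (bcastTuple c a m)) ∨ ∃ d, x = .catchup d a) := by
  rcases h.chan_cases a b with heq | ⟨y, heq, hba, hy⟩ | ⟨y, heq, -⟩
  · exact Or.inl (heq ▸ hx)
  · rcases List.mem_append.1 (heq ▸ hx) with hx | hx
    · exact Or.inl hx
    · exact Or.inr ⟨hba, List.mem_singleton.1 hx ▸ hy⟩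
  · exact Or.inl (heq ▸ List.mem_cons_of_mem y hx)

theorem Step.mem_pending {j : Fin n} {tp : Tuple n M} (h : Step G c l c')
    (htp : tp ∈ (c'.proc j).pending) :
    tp ∈ (c.proc j).pending ∨ (∃ m, l = .broadcast j m ∧ tp = bcastTuple c j m) ∨
      ∃ a rest, l = .recvToco j a ∧ c.chan a j = .tocobc tp :: rest := by
  cases h with
  | broadcast i m =>
    rcases eq_or_ne j i with rfl | hji
    · have htp : tp = bcastTuple c j m ∨ tp ∈ (c.proc j).pending := by
        simpa [bcastTuple] using htp
      rcases htp with rfl | htp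
      · exact Or.inr (Or.inl ⟨m, rfl, rfl⟩)
      · exact Or.inl htp
    · exact Or.inl (by simpa [Function.update_of_ne hji] using htp)
  | recvToco i a tp' rest hhead =>
    rcases eq_or_ne j i with rfl | hji
    · have htp : tp = tp' ∨ tp ∈ (c.proc j).pending := by simpa using htp
      rcases htp with rfl | htp
      · exact Or.inr (Or.inr ⟨a, rest, rfl, hhead⟩)
      · exact Or.inl htp
    · exact Or.inl (by simpa [Function.update_of_ne hji] using htp)
  | recvCatchup i a d s rest hhead =>
    rcases eq_or_ne j i with rfl | hji
    · exact Or.inl (by simpa using htp)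
    · exact Or.inl (by simpa [Function.update_of_ne hji] using htp)
  | deliver i tp' _ _ =>
    rcases eq_or_ne j i with rfl | hji
    · simp only [Function.update_self, Set.mem_sdiff] at htp
      exact Or.inl htp.1
    · exact Or.inl (by simpa [Function.update_of_ne hji] using htp)

theorem Step.mem_pending_or_deliver {j : Fin n} {tp : Tuple n M} (h : Step G c l c')
    (htp : tp ∈ (c.proc j).pending) : tp ∈ (c'.proc j).pending ∨ l = .deliver j tp := by
  cases h with
  | broadcast i m =>
    rcases eq_or_ne j i with rfl | hji
    · simp [htp]
    · simp [Function.update_of_ne hji, htp]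
  | recvToco i a tp' rest hhead =>
    rcases eq_or_ne j i with rfl | hji
    · simp [htp]
    · simp [Function.update_of_ne hji, htp]
  | recvCatchup i a d s rest hhead =>
    rcases eq_or_ne j i with rfl | hji
    · simp [htp]
    · simp [Function.update_of_ne hji, htp]
  | deliver i tp' _ _ =>
    rcases eq_or_ne j i with rfl | hji
    · by_cases htp' : tp = tp'
      · exact Or.inr (htp' ▸ rfl)
      · simp [htp, htp']
    · simp [Function.update_of_ne hji, htp]

theorem Step.causal_le (h : Step G c l c') (j : Fin n) :
    (c.proc j).causal ≤ (c'.proc j).causal := by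
  cases h with
  | broadcast i m =>
    rcases eq_or_ne j i with rfl | hji
    · simp
    · simp [Function.update_of_ne hji]
  | recvToco i a tp rest hhead =>
    rcases eq_or_ne j i with rfl | hji
    · simp
    · simp [Function.update_of_ne hji]
  | recvCatchup i a d s rest hhead =>
    rcases eq_or_ne j i with rfl | hji
    · simp
    · simp [Function.update_of_ne hji]
  | deliver i tp _ _ =>
    rcases eq_or_ne j i with rfl | hji
    · simp only [Function.update_self]
      split_ifs <;> simp
    · simp [Function.update_of_ne hji]

theorem Step.wellAddressed (h : Step G c l c') (hc : c.WellAddressed) : c'.WellAddressed := by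
  intro a b x hx
  rcases h.mem_chan hx with hx | ⟨hba, ⟨m, -, rfl⟩ | ⟨d, rfl⟩⟩
  · exact hc a b x hx
  · exact ⟨rfl, hba⟩
  · exact ⟨rfl, hba⟩

-- `p_i` never receives its own messages, so a reception cannot lower `total_i[i]`.
theorem Step.total_self_le (h : Step G c l c') (hc : c.WellAddressed) (i : Fin n) :
    (c.proc i).total i ≤ (c'.proc i).total i := by
  cases h with
  | broadcast i' m =>
    rcases eq_or_ne i i' with rfl | hii
    · simp
    · simp [Function.update_of_ne hii]
  | recvToco i' a tp rest hhead =>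
    rcases eq_or_ne i i' with rfl | hii
    · obtain ⟨rfl, hia⟩ := hc a i (.tocobc tp) (by simp [hhead])
      simp only [Function.update_self]
      split_ifs with hle
      · simp only [Function.update_self]
        omega
      · simp only [PMsg.sender] at hia
        rw [Function.update_of_ne hia]
    · simp [Function.update_of_ne hii]
  | recvCatchup i' a d s rest hhead =>
    rcases eq_or_ne i i' with rfl | hii
    · obtain ⟨rfl, hia⟩ := hc a i (.catchup d s) (by simp [hhead])
      simp only [PMsg.sender] at hia
      simp [Function.update_of_ne hia]
    · simp [Function.update_of_ne hii]
  | deliver i' tp _ _ =>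
    rcases eq_or_ne i i' with rfl | hii
    · simp
    · simp [Function.update_of_ne hii]

theorem Step.carries {tp : Tuple n M} (h : Step G c l c') (htp : c'.Carries tp) :
    c.Carries tp ∨ ∃ i m, l = .broadcast i m ∧ tp = bcastTuple c i m := by
  rcases htp with ⟨a, b, hx⟩ | ⟨j, hx⟩
  · rcases h.mem_chan hx with hx | ⟨-, ⟨m, hl, htp⟩ | ⟨d, hd⟩⟩
    · exact Or.inl (Or.inl ⟨a, b, hx⟩)
    · exact Or.inr ⟨a, m, hl, PMsg.tocobc.inj htp⟩
    · cases hd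
  · rcases h.mem_pending hx with hx | ⟨m, hl, htp⟩ | ⟨a, rest, -, hhead⟩
    · exact Or.inl (Or.inr ⟨j, hx⟩)
    · exact Or.inr ⟨j, m, hl, htp⟩
    · exact Or.inl (Or.inl ⟨a, j, by simp [hhead]⟩)

theorem Step.queuedAhead {i j : Fin n} {tp₁ tp₂ : Tuple n M} (h : Step G c l c')
    (hc : c.WellAddressed) (hji : j ≠ i) (hsender : tp₂.sender = i)
    (hq : c.QueuedAhead i j tp₁ tp₂) : tp₁ ∈ (c'.proc j).pending ∨ c'.QueuedAhead i j tp₁ tp₂ := by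
  obtain ⟨hmem, hbefore, hpending⟩ := hq
  have hpending' : tp₂ ∉ (c'.proc j).pending := by
    intro h₂
    rcases h.mem_pending h₂ with h₂ | ⟨m, -, rfl⟩ | ⟨a, rest, -, hhead⟩
    · exact hpending h₂
    · exact hji hsender
    · obtain ⟨rfl, -⟩ : tp₂.sender = a ∧ j ≠ a := hc a j (.tocobc tp₂) (by simp [hhead])
      rw [hsender] at hhead
      rw [hhead] at hbefore
      exact hbefore.of_cons.1 rfl
  rcases h.chan_cases i j with heq | ⟨x, heq, -⟩ | ⟨x, heq, hrecv⟩
  · exact Or.inr ⟨heq ▸ hmem, heq ▸ hbefore, hpending'⟩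
  · exact Or.inr ⟨heq ▸ List.mem_append_left _ hmem, heq ▸ hbefore.append_singleton hmem x,
      hpending'⟩
  · rw [heq] at hmem hbefore
    by_cases hx : x = .tocobc tp₁
    · exact Or.inl (hrecv tp₁ hx)
    · exact Or.inr ⟨List.mem_of_ne_of_mem (Ne.symm hx) hmem, hbefore.of_cons.2 hx, hpending'⟩

theorem Step.total_broadcast {i : Fin n} {m : M} (h : Step G c (.broadcast i m) c') :
    (c'.proc i).total i = (c.proc i).total i + 1 := by
  cases h; simp

theorem Step.mem_pending_broadcast {i : Fin n} {m : M} (h : Step G c (.broadcast i m) c') :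
    bcastTuple c i m ∈ (c'.proc i).pending := by
  cases h; simp [bcastTuple]

theorem Step.mem_chan_broadcast {i j : Fin n} {m : M} (h : Step G c (.broadcast i m) c')
    (hji : j ≠ i) : .tocobc (bcastTuple c i m) ∈ c'.chan i j := by
  cases h; simp [bcastTuple, hji]

theorem Step.inT2_of_deliver {j : Fin n} {tp : Tuple n M} (h : Step G c (.deliver j tp) c') :
    inT2 G c j tp ∧ ∀ tp', inT2 G c j tp' → tsLe (tp.stot, tp.sender) (tp'.stot, tp'.sender) := by
  cases h with
  | deliver _ _ hT2 hmin => exact ⟨hT2, hmin⟩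

namespace Execution

variable (e : Execution n M G)

theorem step_of_lbl {t : ℕ} {l : Label n M} (h : e.lbl t = some l) :
    Step G (e.cfg t) l (e.cfg (t + 1)) := by
  simpa [h, OptStep] using e.steps t

theorem cfg_succ (t : ℕ) :
    e.cfg (t + 1) = e.cfg t ∨ ∃ l, e.lbl t = some l ∧ Step G (e.cfg t) l (e.cfg (t + 1)) := by
  cases hl : e.lbl t with
  | none => exact Or.inl (by simpa [hl, OptStep] using e.steps t)
  | some l => exact Or.inr ⟨l, rfl, e.step_of_lbl hl⟩

theorem wellAddressed (t : ℕ) : (e.cfg t).WellAddressed := by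
  induction t with
  | zero =>
    intro a b x hx
    simp [e.init, initConfig] at hx
  | succ t ih =>
    rcases e.cfg_succ t with heq | ⟨l, -, h⟩
    · exact heq ▸ ih
    · exact h.wellAddressed ih

theorem causal_monotone (j : Fin n) : Monotone fun t => ((e.cfg t).proc j).causal := by
  refine monotone_nat_of_le_succ fun t => ?_
  rcases e.cfg_succ t with heq | ⟨l, -, h⟩
  · rw [heq]
  · exact h.causal_le j

theorem total_self_monotone (i : Fin n) : Monotone fun t => ((e.cfg t).proc i).total i := by
  refine monotone_nat_of_le_succ fun t => ?_
  rcases e.cfg_succ t with heq | ⟨l, -, h⟩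
  · rw [heq]
  · exact h.total_self_le (e.wellAddressed t) i

theorem stot_bcastTuple_lt {i : Fin n} {m₁ : M} {t₁ t₂ : ℕ} (hb : e.broadcastsAt i m₁ t₁)
    (h₁₂ : t₁ < t₂) (m₂ : M) :
    (bcastTuple (e.cfg t₁) i m₁).stot < (bcastTuple (e.cfg t₂) i m₂).stot :=
  calc ((e.cfg t₁).proc i).total i + 1 = ((e.cfg (t₁ + 1)).proc i).total i :=
        ((e.step_of_lbl hb).total_broadcast).symm
    _ ≤ ((e.cfg t₂).proc i).total i := e.total_self_monotone i h₁₂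
    _ < ((e.cfg t₂).proc i).total i + 1 := lt_add_one _

theorem exists_broadcast_of_carries {t : ℕ} {tp : Tuple n M} (h : (e.cfg t).Carries tp) :
    ∃ s < t, ∃ i m, e.broadcastsAt i m s ∧ tp = bcastTuple (e.cfg s) i m := by
  induction t with
  | zero => rcases h with ⟨a, b, h⟩ | ⟨j, h⟩ <;> simp [e.init, initConfig] at h
  | succ t ih =>
    rcases e.cfg_succ t with heq | ⟨l, hl, hstep⟩
    · obtain ⟨s, hs, hb⟩ := ih (heq ▸ h)
      exact ⟨s, hs.trans t.lt_succ_self, hb⟩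
    · rcases hstep.carries h with h | ⟨i, m, rfl, rfl⟩
      · obtain ⟨s, hs, hb⟩ := ih h
        exact ⟨s, hs.trans t.lt_succ_self, hb⟩
      · exact ⟨t, t.lt_succ_self, i, m, hl, rfl⟩

theorem eq_bcastTuple_of_carries {i : Fin n} {m : M} {s t : ℕ} {tp : Tuple n M}
    (hb : e.broadcastsAt i m s) (h : (e.cfg t).Carries tp) (hm : tp.msg = m) :
    s < t ∧ tp = bcastTuple (e.cfg s) i m := by
  obtain ⟨s', hs', i', m', hb', rfl⟩ := e.exists_broadcast_of_carries h
  obtain rfl : m' = m := hm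
  obtain rfl := e.uniqueBcast m' i' i s' s hb' hb
  obtain rfl : i' = i := by simpa using hb'.symm.trans hb
  exact ⟨hs', rfl⟩

def Received (j : Fin n) (tp : Tuple n M) (t : ℕ) : Prop :=
  tp ∈ ((e.cfg t).proc j).pending ∨ ∃ s < t, e.lbl s = some (.deliver j tp)

variable {e}

theorem Received.succ {j : Fin n} {tp : Tuple n M} {t : ℕ} (h : e.Received j tp t) :
    e.Received j tp (t + 1) := by
  rcases h with hp | ⟨s, hs, hl⟩
  · rcases e.cfg_succ t with heq | ⟨l, hl, hstep⟩
    · exact Or.inl (heq ▸ hp)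
    · rcases hstep.mem_pending_or_deliver hp with hp | rfl
      · exact Or.inl hp
      · exact Or.inr ⟨t, t.lt_succ_self, hl⟩
  · exact Or.inr ⟨s, hs.trans t.lt_succ_self, hl⟩

theorem Received.mono {j : Fin n} {tp : Tuple n M} {t t' : ℕ} (h : e.Received j tp t)
    (ht : t ≤ t') : e.Received j tp t' := by
  induction t', ht using Nat.le_induction with
  | base => exact h
  | succ t' _ ih => exact ih.succ

theorem received_or_queuedAhead {i j : Fin n} {tp₁ tp₂ : Tuple n M} (hji : j ≠ i)
    (hsender : tp₂.sender = i) {t₀ t : ℕ} (hq : (e.cfg t₀).QueuedAhead i j tp₁ tp₂)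
    (ht : t₀ ≤ t) : e.Received j tp₁ t ∨ (e.cfg t).QueuedAhead i j tp₁ tp₂ := by
  induction t, ht using Nat.le_induction with
  | base => exact Or.inr hq
  | succ t _ ih =>
    rcases ih with hr | hq
    · exact Or.inl hr.succ
    rcases e.cfg_succ t with heq | ⟨l, -, hstep⟩
    · exact Or.inr (heq ▸ hq)
    · exact (hstep.queuedAhead (e.wellAddressed t) hji hsender hq).imp_left Or.inl

theorem received_of_mem_pending {i j : Fin n} {m₁ m₂ : M} {t₁ t₂ t : ℕ} (h₁₂ : t₁ < t₂)
    (hb₁ : e.broadcastsAt i m₁ t₁) (hb₂ : e.broadcastsAt i m₂ t₂)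
    (hp : bcastTuple (e.cfg t₂) i m₂ ∈ ((e.cfg t).proc j).pending) :
    e.Received j (bcastTuple (e.cfg t₁) i m₁) t := by
  have hstep := e.step_of_lbl hb₁
  have ht : t₁ + 1 ≤ t := h₁₂.trans (e.eq_bcastTuple_of_carries hb₂ (Or.inr ⟨j, hp⟩) rfl).1
  rcases eq_or_ne j i with rfl | hji
  · exact Received.mono (Or.inl hstep.mem_pending_broadcast) ht
  have hfresh : ¬(e.cfg (t₁ + 1)).Carries (bcastTuple (e.cfg t₂) i m₂) := fun h =>
    (e.eq_bcastTuple_of_carries hb₂ h rfl).1.not_ge h₁₂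
  have hq : (e.cfg (t₁ + 1)).QueuedAhead i j (bcastTuple (e.cfg t₁) i m₁)
      (bcastTuple (e.cfg t₂) i m₂) :=
    ⟨hstep.mem_chan_broadcast hji,
      OccursBefore.of_notMem fun h => hfresh (Or.inl ⟨i, j, h⟩),
      fun h => hfresh (Or.inr ⟨j, h⟩)⟩
  exact (received_or_queuedAhead hji rfl hq ht).resolve_right fun hq => hq.2.2 hp

end Execution

end

/-- **Same-sender delivery Lemma (Lemma 4 of the paper).**  In any execution of
Algorithm 1, if a process `p_i` toco-broadcasts `m1` and later toco-broadcasts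
`m2`, then any process `p_j` that toco-delivers `m2` must have toco-delivered
`m1` before `m2`. -/
theorem same_sender_delivery_order {n : ℕ} {M : Type} {G : SimpleGraph (Fin n)}
    (e : Execution n M G) :
    ∀ (i j : Fin n) (m1 m2 : M) (t1 t2 td : ℕ), t1 < t2 →
      e.broadcastsAt i m1 t1 → e.broadcastsAt i m2 t2 → e.deliversAt j m2 td →
      ∃ td', td' < td ∧ e.deliversAt j m1 td' := by
  rintro i j m1 m2 t1 t2 td h12 hb1 hb2 ⟨tp, htp, hdel⟩
  obtain ⟨hT2, hmin⟩ := (e.step_of_lbl hdel).inT2_of_deliver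
  obtain ⟨-, rfl⟩ := e.eq_bcastTuple_of_carries hb2 (Or.inr ⟨j, hT2.1.1.1⟩) htp
  rcases e.received_of_mem_pending h12 hb1 hb2 hT2.1.1.1 with hp | ⟨td', htd', hdel'⟩
  · have hstot := e.stot_bcastTuple_lt hb1 h12 m2
    have hT2₁ := inT2_of_stot_lt hT2 hp rfl hstot (e.causal_monotone i h12.le)
    exact absurd (hmin _ hT2₁).fst_le hstot.not_ge
  · exact ⟨td', htd', _, rfl, hdel'⟩

end Fisheye
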